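/- Let (G_A, G_M) be the pair of graphs constructed from an input graph H with n = |V(H)| as follows: V(G_A) = V(H) ∪ X ∪ {a,b} where |X| = n, with edge set E(complement of H) ∪ (all pairs within X) ∪ {edges from a to all of V(H) ∪ X} ∪ {edges from b to all of V(H)}; V(G_M) = V(C) ∪ Y ∪ {p,q} where C is an n-cycle and |Y| = n, with edge set E(C) ∪ (all pairs within Y) ∪ (all pairs between Y and V(C) ∪ {q}) ∪ {{p,q}}. If H has a Hamiltonian circuit, then (G_A, G_M) is not almighty: there exists a bijective arrangement f with f(a) = p, f(b) = q, f(X) = Y, f(V(H)) = V(C), mapping every edge of the complement of H to a non-edge of C, and f is not t-equivalent to the constant arrangement mapping everything to p. -/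

import Mathlib

/-- An arrangement of agents (vertices of `GA`) into countries (vertices of `GM`):
every nonempty preimage induces a connected subgraph of `GA`. -/
def IsArrangement {A M : Type*} (GA : SimpleGraph A) (f : A → M) : Prop :=
  ∀ c : M, (f ⁻¹' {c}).Nonempty → (GA.induce (f ⁻¹' {c})).Connected

/-- An AAP transfer: a set `U` of agents of country `s` is moved along an edge
`st` of `GM` to country `t`; each of `GA[U]`, `GA[f⁻¹(s) \ U]`, `GA[f⁻¹(t) ∪ U]`
is connected or empty, and `f⁻¹({s,t}) \ U ≠ ∅`. -/
def Transfer {A M : Type*} (GA : SimpleGraph A) (GM : SimpleGraph M)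
    (f g : A → M) : Prop :=
  ∃ (s t : M) (U : Set A), GM.Adj s t ∧ U ⊆ f ⁻¹' {s} ∧
    (U = ∅ ∨ (GA.induce U).Connected) ∧
    (f ⁻¹' {s} \ U = ∅ ∨ (GA.induce (f ⁻¹' {s} \ U)).Connected) ∧
    (f ⁻¹' {t} ∪ U = ∅ ∨ (GA.induce (f ⁻¹' {t} ∪ U)).Connected) ∧
    (f ⁻¹' {s, t} \ U).Nonempty ∧
    (∀ x ∈ U, g x = t) ∧ (∀ x, x ∉ U → g x = f x)

/-- t-equivalence: related by a finite sequence of transfers. -/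
def TEquiv {A M : Type*} (GA : SimpleGraph A) (GM : SimpleGraph M)
    (f g : A → M) : Prop :=
  Relation.ReflTransGen (Transfer GA GM) f g

/-- A SUBNET MERGER along an edge `st` of `GM`: all agents of `s` are merged into
country `t`, where `f⁻¹(s) ≠ ∅`, `|f⁻¹({s,t})| ≥ 2` and `GA[f⁻¹({s,t})]` is
connected. -/
def SubnetMerger {A M : Type*} (GA : SimpleGraph A) (GM : SimpleGraph M)
    (f g : A → M) : Prop :=
  ∃ s t : M, GM.Adj s t ∧ (f ⁻¹' {s}).Nonempty ∧
    2 ≤ (f ⁻¹' ({s, t} : Set M)).ncard ∧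
    (GA.induce (f ⁻¹' ({s, t} : Set M))).Connected ∧
    (∀ x, f x ∈ ({s, t} : Set M) → g x = t) ∧
    (∀ x, f x ∉ ({s, t} : Set M) → g x = f x)

/-- The number of pebbles of the configuration associated with an arrangement:
the number of countries holding at least two agents. -/
noncomputable def pebCount {A M : Type*} (f : A → M) : ℕ :=
  {c : M | 2 ≤ (f ⁻¹' {c}).ncard}.ncard

/-- `g` is an `f`-irreducible arrangement: it is t-equivalent to `f` and its
associated configuration has the minimum possible number of pebbles. -/
def IsIrreducibleFor {A M : Type*} (GA : SimpleGraph A) (GM : SimpleGraph M)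
    (f g : A → M) : Prop :=
  TEquiv GA GM f g ∧ ∀ h : A → M, TEquiv GA GM f h → pebCount g ≤ pebCount h

/-- The agent network `G_A` of the reduction: vertices are `V(H) ∪ X ∪ {a,b}`
(coded `Sum.inl h`, `Sum.inr (Sum.inl x)`, `a = Sum.inr (Sum.inr 0)`,
`b = Sum.inr (Sum.inr 1)`), with the edges of the complement of `H`, all pairs
inside `X`, all edges from `a` to `V(H) ∪ X`, and all edges from `b` to `V(H)`. -/
def agentGraph {V : Type*} (H : SimpleGraph V) : SimpleGraph (V ⊕ V ⊕ Fin 2) :=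
  SimpleGraph.fromRel (fun u w =>
    match u, w with
    | Sum.inl x, Sum.inl y => x ≠ y ∧ ¬ H.Adj x y
    | Sum.inr (Sum.inl x), Sum.inr (Sum.inl y) => x ≠ y
    | Sum.inr (Sum.inr _), Sum.inl _ => True
    | Sum.inr (Sum.inr i), Sum.inr (Sum.inl _) => i = 0
    | _, _ => False)

/-- The route map `G_M` of the reduction: vertices are `V(C) ∪ Y ∪ {p,q}` where `C`
is an `n`-cycle (coded `Sum.inl (c : ZMod n)`), `Y` a set of `n` vertices
(`Sum.inr (Sum.inl y)`), `p = Sum.inr (Sum.inr 0)`, `q = Sum.inr (Sum.inr 1)`;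
edges: the cycle `C`, all pairs inside `Y`, all pairs between `Y` and
`V(C) ∪ {q}`, and the edge `{p,q}`. -/
def routeGraph (n : ℕ) (V : Type*) : SimpleGraph (ZMod n ⊕ V ⊕ Fin 2) :=
  SimpleGraph.fromRel (fun u w =>
    match u, w with
    | Sum.inl x, Sum.inl y => x = y + 1 ∨ y = x + 1
    | Sum.inr (Sum.inl x), Sum.inr (Sum.inl y) => x ≠ y
    | Sum.inr (Sum.inl _), Sum.inl _ => True
    | Sum.inr (Sum.inl _), Sum.inr (Sum.inr i) => i = 1
    | Sum.inr (Sum.inr i), Sum.inr (Sum.inr j) => i = 0 ∧ j = 1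
    | _, _ => False)

/-! From a Hamiltonian cycle of `H`, place `V(H)` bijectively on `C` so that consecutive vertices
of `C` receive `H`-adjacent, hence `G_A`-nonadjacent, agents; send `a ↦ p`, `b ↦ q`, `X ↦ Y`.
Along any sequence of transfers, the agents of `V(H) ∪ {a, b}` stay put: each is alone in its
country, so moving it needs a `G_A`-neighbour of it in the target country, and there is none.
The agents of `X` only move inside `Y`, since every other country holds an agent with no
neighbour in `X`. So `b` stays at `q`, and the constant arrangement at `p` is never reached. -/

open SimpleGraph

lemma SimpleGraph.exists_adj_of_induce_connected {A : Type*} {G : SimpleGraph A} {T S : Set A}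
    (hT : (G.induce T).Connected) {a b : A} (ha : a ∈ T ∩ S) (hb : b ∈ T \ S) :
    ∃ x y, x ∈ T ∩ S ∧ y ∈ T \ S ∧ G.Adj x y := by
  obtain ⟨p⟩ := hT.preconnected ⟨a, ha.1⟩ ⟨b, hb.1⟩
  obtain ⟨d, -, hd₁, hd₂⟩ := p.exists_boundary_dart {x | x.1 ∈ S} ha.2 hb.2
  exact ⟨d.fst, d.snd, ⟨d.fst.2, hd₁⟩, ⟨d.snd.2, hd₂⟩, d.adj⟩

lemma isArrangement_of_injective {A M : Type*} (GA : SimpleGraph A) {f : A → M}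
    (hf : Function.Injective f) : IsArrangement GA f := by
  rintro c ⟨α, rfl⟩
  have : f ⁻¹' {f α} = {α} := Set.ext fun β => ⟨fun h => hf h, fun h => congrArg f h⟩
  rw [this, induce_singleton_eq_top]
  exact connected_top

lemma SimpleGraph.Walk.IsHamiltonianCycle.exists_adj_equiv_zmod {V : Type*} [Fintype V]
    [DecidableEq V] {G : SimpleGraph V} {u : V} {w : G.Walk u u} (hw : w.IsHamiltonianCycle)
    {n : ℕ} [NeZero n] (hn : Fintype.card V = n) :
    ∃ e : ZMod n ≃ V, ∀ c, G.Adj (e c) (e (c + 1)) := by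
  have hlen : w.length = n := hn ▸ hw.length_eq
  have hmod : ∀ k ≤ n, w.getVert (k % n) = w.getVert k := by
    intro k hk
    rcases hk.lt_or_eq with hk | rfl
    · rw [Nat.mod_eq_of_lt hk]
    · rw [Nat.mod_self, getVert_zero, ← hlen, getVert_length]
  let σ : ZMod n → V := fun c => w.getVert c.val
  have hsurj : σ.Surjective := by
    intro v
    obtain ⟨m, rfl, hm⟩ := Walk.mem_support_iff_exists_getVert.mp (hw.mem_support v)
    exact ⟨m, by simp only [σ, ZMod.val_natCast, hmod m (hlen ▸ hm)]⟩
  have hbij : σ.Bijective := by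
    rw [Fintype.bijective_iff_surjective_and_card]
    exact ⟨hsurj, by simp [ZMod.card, hn]⟩
  refine ⟨Equiv.ofBijective σ hbij, fun c => ?_⟩
  have hsucc : (c + 1).val = (c.val + 1) % n := by
    rw [ZMod.val_add, ZMod.val_one_eq_one_mod, Nat.add_mod_mod]
  simp only [Equiv.ofBijective_apply, σ, hsucc, hmod _ c.val_lt]
  exact w.adj_getVert_succ (hlen ▸ c.val_lt)

namespace Transfer

variable {A M : Type*} {GA : SimpleGraph A} {GM : SimpleGraph M} {g g' : A → M} {α : A}

lemma exists_moved_set (h : Transfer GA GM g g') (hα : g' α ≠ g α) :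
    ∃ U : Set A, α ∈ U ∧ GM.Adj (g α) (g' α) ∧ (∀ β ∈ U, g β = g α ∧ g' β = g' α) ∧
      (∀ β ∉ U, g' β = g β) ∧ (GA.induce (g ⁻¹' {g' α} ∪ U)).Connected ∧
      (g ⁻¹' {g α, g' α} \ U).Nonempty := by
  obtain ⟨s, t, U, hst, hUs, -, -, htgt, hne, hU, hnotU⟩ := h
  have hαU : α ∈ U := by_contra fun h => hα (hnotU α h)
  have hs : g α = s := hUs hαU
  have ht : g' α = t := hU α hαU
  subst hs ht
  refine ⟨U, hαU, hst, fun β hβ => ⟨hUs hβ, hU β hβ⟩, hnotU, ?_, hne⟩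
  exact htgt.resolve_left (Set.nonempty_iff_ne_empty.mp ⟨α, Or.inr hαU⟩)

lemma adj_of_ne (h : Transfer GA GM g g') (hα : g' α ≠ g α) : GM.Adj (g α) (g' α) := by
  obtain ⟨_, -, hadj, -⟩ := h.exists_moved_set hα
  exact hadj

lemma exists_adj_of_ne_of_occupied (h : Transfer GA GM g g') (hα : g' α ≠ g α)
    {β₀ : A} (hβ₀ : g β₀ = g' α) :
    ∃ β γ, g β = g' α ∧ g γ = g α ∧ GA.Adj γ β := by
  obtain ⟨U, hαU, hadj, hU, -, hconn, -⟩ := h.exists_moved_set hα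
  have hβ₀U : β₀ ∉ U := fun hβ₀U => hadj.ne ((hU β₀ hβ₀U).1.symm.trans hβ₀)
  obtain ⟨γ, β, ⟨-, hγU⟩, ⟨hβ | hβ, hβU⟩, hγβ⟩ :=
    exists_adj_of_induce_connected hconn ⟨Or.inr hαU, hαU⟩ ⟨Or.inl hβ₀, hβ₀U⟩
  · exact ⟨β, γ, hβ, (hU γ hγU).1, hγβ⟩
  · exact absurd hβ hβU

lemma exists_stays_of_ne_of_vacant (h : Transfer GA GM g g') (hα : g' α ≠ g α)
    (hvac : ∀ β, g β ≠ g' α) : ∃ β, g β = g α ∧ g' β = g α := by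
  obtain ⟨U, -, -, -, hnotU, -, β, hβ, hβU⟩ := h.exists_moved_set hα
  rcases hβ with hβ | hβ
  · exact ⟨β, hβ, (hnotU β hβU).trans hβ⟩
  · exact absurd hβ (hvac β)

lemma exists_adj_of_ne_of_alone (h : Transfer GA GM g g') (hα : g' α ≠ g α)
    (halone : ∀ β, g β = g α → β = α) : ∃ β, g β = g' α ∧ GA.Adj α β := by
  by_cases hocc : ∃ β₀, g β₀ = g' α
  · obtain ⟨β₀, hβ₀⟩ := hocc
    obtain ⟨β, γ, hβ, hγ, hγβ⟩ := h.exists_adj_of_ne_of_occupied hα hβ₀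
    exact ⟨β, hβ, halone γ hγ ▸ hγβ⟩
  · push Not at hocc
    obtain ⟨β, hβ, hβ'⟩ := h.exists_stays_of_ne_of_vacant hα hocc
    exact absurd (halone β hβ ▸ hβ') hα

end Transfer

section Reduction

variable {V : Type*} {H : SimpleGraph V} {n : ℕ}

lemma agentGraph_connected [Nonempty V] : (agentGraph H).Connected := by
  obtain ⟨v⟩ := ‹Nonempty V›
  have hub : ∀ α, (agentGraph H).Reachable α (Sum.inr (Sum.inr 0)) := by
    rintro (h | x | i)
    · exact Adj.reachable (by simp [agentGraph])
    · exact Adj.reachable (by simp [agentGraph])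
    · refine Fin.cases .rfl (fun _ => ?_) i
      exact (Adj.reachable (v := Sum.inl v) (by simp [agentGraph])).trans
        (Adj.reachable (by simp [agentGraph]))
  have : Nonempty (V ⊕ V ⊕ Fin 2) := ⟨Sum.inl v⟩
  exact ⟨fun α β => (hub α).trans (hub β).symm⟩

lemma agentGraph_adj_inl_inl {x y : V} :
    (agentGraph H).Adj (Sum.inl x) (Sum.inl y) ↔ x ≠ y ∧ ¬ H.Adj x y := by
  simp only [agentGraph, fromRel_adj, ne_eq, Sum.inl.injEq]
  exact ⟨fun ⟨hne, h⟩ => h.elim id fun h => ⟨hne, fun hxy => h.2 hxy.symm⟩,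
    fun h => ⟨h.1, Or.inl h⟩⟩

lemma routeGraph_adj_inl_inl {c c' : ZMod n} :
    (routeGraph n V).Adj (Sum.inl c) (Sum.inl c') ↔ c ≠ c' ∧ (c = c' + 1 ∨ c' = c + 1) := by
  simp only [routeGraph, fromRel_adj, ne_eq, Sum.inl.injEq]
  tauto

/-- `V(H)` sits on `C` via `τ`, `a` at `p`, `b` at `q`, and `X` anywhere inside `Y`. -/
def IsPinned (τ : V → ZMod n) (g : V ⊕ V ⊕ Fin 2 → ZMod n ⊕ V ⊕ Fin 2) : Prop :=
  ∃ ρ : V → V, g = Sum.map τ (Sum.map ρ id)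

lemma IsPinned.exists_eq_inr_inl_of_transfer {τ : V → ZMod n} (hτ : τ.Bijective)
    (hcycle : ∀ x y, (routeGraph n V).Adj (Sum.inl (τ x)) (Sum.inl (τ y)) → H.Adj x y)
    {g g' : V ⊕ V ⊕ Fin 2 → ZMod n ⊕ V ⊕ Fin 2} (hg : IsPinned τ g)
    (ht : Transfer (agentGraph H) (routeGraph n V) g g') {α : V ⊕ V ⊕ Fin 2}
    (hα : g' α ≠ g α) : ∃ x y, α = Sum.inr (Sum.inl x) ∧ g' α = Sum.inr (Sum.inl y) := by
  obtain ⟨ρ, rfl⟩ := hg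
  have hadj := ht.adj_of_ne hα
  rcases α with h | x | i
  · obtain ⟨β, hβ, hhβ⟩ := ht.exists_adj_of_ne_of_alone hα <| by
      rintro (h' | x | i) hβ <;> simp_all [hτ.1.eq_iff]
    rw [← hβ] at hadj
    rcases β with h' | x | i
    · exact absurd (hcycle _ _ hadj) (agentGraph_adj_inl_inl.mp hhβ).2
    all_goals simp [agentGraph, routeGraph] at hhβ hadj
  · refine ⟨x, ?_⟩
    rcases hx : g' (Sum.inr (Sum.inl x)) with c | y | i
    · obtain ⟨h, rfl⟩ := hτ.2 c
      obtain ⟨β, γ, hβ, hγ, hγβ⟩ :=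
        ht.exists_adj_of_ne_of_occupied hα (β₀ := Sum.inl h) (by rw [hx]; rfl)
      rw [hx] at hβ
      rcases β with h' | x' | i' <;> rcases γ with h'' | x'' | i'' <;>
        simp [agentGraph] at hβ hγ hγβ
    · exact ⟨y, rfl, rfl⟩
    · obtain rfl : i = 1 := by simpa [hx, routeGraph] using hadj
      obtain ⟨β, γ, hβ, hγ, hγβ⟩ :=
        ht.exists_adj_of_ne_of_occupied hα (β₀ := Sum.inr (Sum.inr 1)) (by rw [hx]; rfl)
      rw [hx] at hβ
      rcases β with h' | x' | i' <;> rcases γ with h'' | x'' | i'' <;>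
        simp [agentGraph] at hβ hγ hγβ
      simp [hβ] at hγβ
  · obtain ⟨β, hβ, hiβ⟩ := ht.exists_adj_of_ne_of_alone hα <| by
      rintro (h' | x | i') hβ <;> simp_all
    rw [← hβ] at hadj
    rcases β with h' | x | i' <;> simp [agentGraph, routeGraph] at hiβ hadj
    simp [hiβ] at hadj

lemma IsPinned.of_tEquiv {τ : V → ZMod n} (hτ : τ.Bijective)
    (hcycle : ∀ x y, (routeGraph n V).Adj (Sum.inl (τ x)) (Sum.inl (τ y)) → H.Adj x y)
    {g g' : V ⊕ V ⊕ Fin 2 → ZMod n ⊕ V ⊕ Fin 2} (hg : IsPinned τ g)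
    (ht : TEquiv (agentGraph H) (routeGraph n V) g g') : IsPinned τ g' := by
  induction ht with
  | refl => exact hg
  | @tail g₁ g₂ _ ht hg₁ =>
    have hmoved := fun α => hg₁.exists_eq_inr_inl_of_transfer hτ hcycle ht (α := α)
    obtain ⟨ρ, rfl⟩ := hg₁
    have hX : ∀ x, ∃ y, g₂ (Sum.inr (Sum.inl x)) = Sum.inr (Sum.inl y) := fun x => by
      by_cases hx : g₂ (Sum.inr (Sum.inl x)) = Sum.inr (Sum.inl (ρ x))
      · exact ⟨ρ x, hx⟩
      · obtain ⟨_, y, -, hy⟩ := hmoved _ hx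
        exact ⟨y, hy⟩
    choose ρ' hρ' using hX
    refine ⟨ρ', funext fun α => ?_⟩
    rcases α with h | x | i
    case inr.inl => exact hρ' x
    all_goals
      by_contra hne
      obtain ⟨_, _, hα, -⟩ := hmoved _ hne
      simp at hα

end Reduction

theorem hamiltonian_implies_not_almighty_general {V : Type*} [Fintype V] [DecidableEq V]
    (H : SimpleGraph V) (n : ℕ) [NeZero n]
    (hn : Fintype.card V = n)
    (hham : ∃ (u : V) (w : H.Walk u u), w.IsHamiltonianCycle) :
    (¬ ∀ f g : (V ⊕ V ⊕ Fin 2) → (ZMod n ⊕ V ⊕ Fin 2),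
        IsArrangement (agentGraph H) f → IsArrangement (agentGraph H) g →
        TEquiv (agentGraph H) (routeGraph n V) f g) ∧
    ∃ f : (V ⊕ V ⊕ Fin 2) → (ZMod n ⊕ V ⊕ Fin 2),
      IsArrangement (agentGraph H) f ∧ Function.Bijective f ∧
      f (Sum.inr (Sum.inr 0)) = Sum.inr (Sum.inr 0) ∧
      f (Sum.inr (Sum.inr 1)) = Sum.inr (Sum.inr 1) ∧
      Set.range (fun x : V => f (Sum.inr (Sum.inl x)))
        = Set.range (fun y : V => (Sum.inr (Sum.inl y) : ZMod n ⊕ V ⊕ Fin 2)) ∧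
      Set.range (fun x : V => f (Sum.inl x))
        = Set.range (fun c : ZMod n => (Sum.inl c : ZMod n ⊕ V ⊕ Fin 2)) ∧
      (∀ x y : V, x ≠ y → ¬ H.Adj x y →
        ¬ (routeGraph n V).Adj (f (Sum.inl x)) (f (Sum.inl y))) ∧
      ¬ TEquiv (agentGraph H) (routeGraph n V) f
          (fun _ => Sum.inr (Sum.inr 0)) := by
  obtain ⟨_, w, hw⟩ := hham
  obtain ⟨e, he⟩ := hw.exists_adj_equiv_zmod hn
  have hcycle : ∀ x y, (routeGraph n V).Adj (Sum.inl (e.symm x)) (Sum.inl (e.symm y)) →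
      H.Adj x y := by
    intro x y hxy
    rcases (routeGraph_adj_inl_inl.mp hxy).2 with h | h
    · simpa [← h] using (he (e.symm y)).symm
    · simpa [← h] using he (e.symm x)
  let f : V ⊕ V ⊕ Fin 2 → ZMod n ⊕ V ⊕ Fin 2 := Sum.map e.symm id
  have hf : f.Bijective := e.symm.bijective.sumMap Function.bijective_id
  have hnot : ¬ TEquiv (agentGraph H) (routeGraph n V) f (fun _ => Sum.inr (Sum.inr 0)) := by
    intro hfp
    obtain ⟨ρ, hρ⟩ := IsPinned.of_tEquiv e.symm.bijective hcycle ⟨id, by simp [f]⟩ hfp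
    simpa using congrFun hρ (Sum.inr (Sum.inr 1))
  have : Nonempty V := Fintype.card_pos_iff.mp (hn ▸ Nat.pos_of_neZero n)
  refine ⟨fun hall => hnot (hall _ _ (isArrangement_of_injective _ hf.1) ?_),
    f, isArrangement_of_injective _ hf.1, hf, rfl, rfl, rfl, ?_,
    fun x y _ hxy hadj => hxy (hcycle x y hadj), hnot⟩
  · rintro c ⟨α, rfl⟩
    rw [Set.preimage_const_of_mem (Set.mem_singleton _)]
    exact (induceUnivIso _).connected_iff.mpr agentGraph_connected
  · exact e.symm.surjective.range_comp Sum.inl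

/-- If `H` has a Hamiltonian circuit, then the pair `(G_A, G_M)` of the reduction
is not almighty: there is a bijective arrangement `f` with `f(a) = p`, `f(b) = q`,
`f(X) = Y`, `f(V(H)) = V(C)`, sending every edge of the complement of `H` to a
non-edge of `G_M`, which is not t-equivalent to the constant arrangement at `p`. -/
theorem hamiltonian_implies_not_almighty {V : Type*} [Fintype V] [DecidableEq V]
    (H : SimpleGraph V) (n : ℕ) [NeZero n]
    (hn : Fintype.card V = n) (h3 : 3 ≤ n)
    (hham : ∃ (u : V) (w : H.Walk u u), w.IsHamiltonianCycle) :
    (¬ ∀ f g : (V ⊕ V ⊕ Fin 2) → (ZMod n ⊕ V ⊕ Fin 2),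
        IsArrangement (agentGraph H) f → IsArrangement (agentGraph H) g →
        TEquiv (agentGraph H) (routeGraph n V) f g) ∧
    ∃ f : (V ⊕ V ⊕ Fin 2) → (ZMod n ⊕ V ⊕ Fin 2),
      IsArrangement (agentGraph H) f ∧ Function.Bijective f ∧
      f (Sum.inr (Sum.inr 0)) = Sum.inr (Sum.inr 0) ∧
      f (Sum.inr (Sum.inr 1)) = Sum.inr (Sum.inr 1) ∧
      Set.range (fun x : V => f (Sum.inr (Sum.inl x)))
        = Set.range (fun y : V => (Sum.inr (Sum.inl y) : ZMod n ⊕ V ⊕ Fin 2)) ∧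
      Set.range (fun x : V => f (Sum.inl x))
        = Set.range (fun c : ZMod n => (Sum.inl c : ZMod n ⊕ V ⊕ Fin 2)) ∧
      (∀ x y : V, x ≠ y → ¬ H.Adj x y →
        ¬ (routeGraph n V).Adj (f (Sum.inl x)) (f (Sum.inl y))) ∧
      ¬ TEquiv (agentGraph H) (routeGraph n V) f
          (fun _ => Sum.inr (Sum.inr 0)) :=
  hamiltonian_implies_not_almighty_general H n hn hham
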